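/- arXiv:0809.1542 — 3 statements merged into one kernel-verified Lean document; each statement's English description precedes it below -/
import Mathlib

section
/- Let T = 2θ and let φ̃ ∈ C¹([0,T²]) be such that there exists a constant κ₀ > 0 with (dφ̃/dt)(t) ≤ −κ₀ for all t ∈ [0,T²]. Then for every g ∈ L²(0,T) and every s > 0, ∫₀^T | ∫_θ^t g(ξ) dξ |² e^{2s φ̃((t−θ)²)} dt ≤ (1/(4sκ₀)) ∫₀^T |g(t)|² e^{2s φ̃((t−θ)²)} dt. -/
open MeasureTheory Real Set

-- Step 3 core: the explicit FTC bound
lemma KT_ftc (a c ξ b : ℝ) (hc : 0 < c) (hξb : ξ ≤ b) :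
    ∫ t in ξ..b, (t - a) * Real.exp (-(c * ((t - a) ^ 2 - (ξ - a) ^ 2)))
      ≤ 1 / (2 * c) := by
  have hder : ∀ t : ℝ, HasDerivAt
      (fun t => -Real.exp (-(c * ((t - a) ^ 2 - (ξ - a) ^ 2))) / (2 * c))
      ((t - a) * Real.exp (-(c * ((t - a) ^ 2 - (ξ - a) ^ 2)))) t := by
    intro t
    have h1 : HasDerivAt (fun t : ℝ => (t - a) ^ 2) (2 * (t - a)) t := by
      simpa using ((hasDerivAt_id t).sub_const a).fun_pow 2
    have h2 : HasDerivAt (fun t : ℝ => -(c * ((t - a) ^ 2 - (ξ - a) ^ 2)))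
        (-(c * (2 * (t - a)))) t := ((h1.sub_const _).const_mul c).neg
    have h3 := (h2.exp).neg.div_const (2 * c)
    refine h3.congr_deriv ?_
    rw [div_eq_iff (mul_ne_zero two_ne_zero hc.ne')]
    ring
  have hcont : Continuous fun t : ℝ =>
      (t - a) * Real.exp (-(c * ((t - a) ^ 2 - (ξ - a) ^ 2))) := by
    continuity
  rw [intervalIntegral.integral_eq_sub_of_hasDerivAt (fun t _ => hder t)
    (hcont.intervalIntegrable _ _)]
  have e1 : Real.exp (-(c * ((ξ - a) ^ 2 - (ξ - a) ^ 2))) = 1 := by simp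
  have e2 : 0 < Real.exp (-(c * ((b - a) ^ 2 - (ξ - a) ^ 2))) := Real.exp_pos _
  rw [e1]
  have h2c : 0 < 2 * c := by linarith
  rw [div_sub_div_same, div_le_div_iff₀ h2c h2c]
  nlinarith [e2]

lemma KT_half (a b c : ℝ) (hab : a < b) (hc : 0 < c)
    (v : ℝ → ℝ) (hvc : ContinuousOn v (Icc a b))
    (hv0 : ∀ t ∈ Icc a b, 0 ≤ v t)
    (hvdec : ∀ ξ t : ℝ, a ≤ ξ → ξ ≤ t → t ≤ b →
      v t ≤ v ξ * Real.exp (-(c * ((t - a) ^ 2 - (ξ - a) ^ 2))))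
    (h : ℝ → ℝ) (hh : MemLp h 2 (volume.restrict (Ioo a b))) :
    ∫ t in Ioo a b, (∫ ξ in a..t, h ξ) ^ 2 * v t
      ≤ (1 / (2 * c)) * ∫ t in Ioo a b, h t ^ 2 * v t := by
  have hab' : a ≤ b := hab.le
  have hmeas : MeasurableSet (Ioo a b) := measurableSet_Ioo
  haveI hfin : IsFiniteMeasure (volume.restrict (Ioo a b)) := ⟨by
    rw [Measure.restrict_apply_univ]; exact measure_Ioo_lt_top⟩
  set μ := volume.restrict (Ioo a b) with hμdef
  have hhm : AEStronglyMeasurable h μ := hh.1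
  have hint : IntegrableOn h (Ioo a b) volume := hh.integrable one_le_two
  have hsq : IntegrableOn (fun t => h t ^ 2) (Ioo a b) volume := by
    exact hh.integrable_sq
  have hIcc_ae : (Icc a b : Set ℝ) =ᵐ[volume] Ioo a b := (Ioo_ae_eq_Icc).symm
  have hint_Icc : IntegrableOn h (Icc a b) volume := by
    rwa [IntegrableOn, Measure.restrict_congr_set hIcc_ae]
  have hsq_Icc : IntegrableOn (fun t => h t ^ 2) (Icc a b) volume := by
    rwa [IntegrableOn, Measure.restrict_congr_set hIcc_ae]
  -- the primitive I and the energy E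
  set I : ℝ → ℝ := fun t => ∫ ξ in a..t, h ξ with hIdef
  set E : ℝ → ℝ := fun r => ∫ ξ in Ioc a r, h ξ ^ 2 with hEdef
  have hIcont : ContinuousOn I (Icc a b) := by
    have := intervalIntegral.continuousOn_primitive (μ := volume) (a := a) (b := b) hint_Icc
    apply ContinuousOn.congr this
    intro t ht
    simp only [hIdef, intervalIntegral.integral_of_le ht.1]
  have hEcont : ContinuousOn E (Icc a b) :=
    intervalIntegral.continuousOn_primitive (μ := volume) (a := a) (b := b) hsq_Icc
  -- Cauchy–Schwarz pointwise
  have hCS : ∀ t ∈ Ioo a b, I t ^ 2 ≤ (t - a) * E t := by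
    intro t ht
    have hat : a ≤ t := ht.1.le
    have hsub : Ioc a t ⊆ Ioo a b := fun x hx => ⟨hx.1, lt_of_le_of_lt hx.2 ht.2⟩
    set ν := volume.restrict (Ioc a t) with hνdef
    haveI : IsFiniteMeasure ν := ⟨by
      rw [Measure.restrict_apply_univ]; exact measure_Ioc_lt_top⟩
    have hmem : MemLp h (ENNReal.ofReal 2) ν := by
      have : MemLp h 2 ν := hh.mono_measure (Measure.restrict_mono hsub le_rfl)
      simpa [ENNReal.ofReal_ofNat] using this
    have hone : MemLp (fun _ : ℝ => (1 : ℝ)) (ENNReal.ofReal 2) ν := memLp_const 1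
    have hpq : Real.HolderConjugate 2 2 := Real.holderConjugate_iff.mpr ⟨one_lt_two, by norm_num⟩
    have hCS0 := MeasureTheory.integral_mul_norm_le_Lp_mul_Lq hpq hmem hone
    have hnorm1 : ∀ ξ : ℝ, ‖h ξ‖ * ‖(1:ℝ)‖ = |h ξ| := by
      intro ξ; simp [Real.norm_eq_abs]
    have habs : |I t| ≤ ∫ ξ, ‖h ξ‖ * ‖(1:ℝ)‖ ∂ν := by
      simp only [hnorm1]
      rw [hIdef]
      simp only [intervalIntegral.integral_of_le hat]
      simpa [Real.norm_eq_abs] using norm_integral_le_integral_norm (μ := ν) (f := h)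
    have hr2 : ∀ x : ℝ, ‖x‖ ^ (2:ℝ) = x ^ 2 := by
      intro x
      rw [show (2:ℝ) = ((2:ℕ):ℝ) by norm_num, Real.rpow_natCast, Real.norm_eq_abs, sq_abs]
    
    have hA : ∫ ξ, ‖h ξ‖ ^ (2:ℝ) ∂ν = E t := by
      simp only [hr2, hEdef, hνdef]
    have hB : ∫ ξ, ‖(1:ℝ)‖ ^ (2:ℝ) ∂ν = t - a := by
      simp only [hr2, one_pow]
      rw [setIntegral_const]
      simp [Real.volume_Ioc, ENNReal.toReal_ofReal, sub_nonneg.mpr hat]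
    rw [hA, hB] at hCS0
    have hEt0 : 0 ≤ E t := setIntegral_nonneg measurableSet_Ioc (fun x _ => sq_nonneg _)
    have hta0 : 0 ≤ t - a := sub_nonneg.mpr hat
    have key : |I t| ≤ E t ^ ((1:ℝ)/2) * (t - a) ^ ((1:ℝ)/2) := le_trans habs hCS0
    have : I t ^ 2 ≤ (E t ^ ((1:ℝ)/2) * (t - a) ^ ((1:ℝ)/2)) ^ 2 := by
      rw [← sq_abs]
      exact pow_le_pow_left₀ (abs_nonneg _) key 2
    refine this.trans_eq ?_
    rw [mul_pow, ← Real.rpow_natCast (E t ^ ((1:ℝ)/2)) 2, ← Real.rpow_natCast ((t-a) ^ ((1:ℝ)/2)) 2,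
      ← Real.rpow_mul hEt0, ← Real.rpow_mul hta0]
    norm_num
    ring
  -- the weight factor P and its bounds
  set P : ℝ → ℝ := fun t => (t - a) * v t with hPdef
  have hPcont : ContinuousOn P (Icc a b) :=
    ((continuous_id.sub continuous_const).continuousOn).mul hvc
  obtain ⟨M, hM⟩ := isCompact_Icc.exists_bound_of_continuousOn hPcont
  obtain ⟨Mv, hMv⟩ := isCompact_Icc.exists_bound_of_continuousOn hvc
  -- measurability
  have hvm : AEStronglyMeasurable v μ := (hvc.mono Ioo_subset_Icc_self).aestronglyMeasurable hmeas
  have hPm : AEStronglyMeasurable P μ := (hPcont.mono Ioo_subset_Icc_self).aestronglyMeasurable hmeas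
  have hh2m : AEStronglyMeasurable (fun t => h t ^ 2) μ := by
    have := hhm.mul hhm
    exact this.congr (Filter.Eventually.of_forall fun t => by simp [sq])
  -- integrability of h² * v
  have hsqv : Integrable (fun t => h t ^ 2 * v t) μ := by
    refine Integrable.mono' ((hsq.const_mul Mv) : Integrable _ μ) (hh2m.mul hvm) ?_
    filter_upwards [ae_restrict_mem hmeas] with t ht
    have h1 : ‖v t‖ ≤ Mv := hMv t (Ioo_subset_Icc_self ht)
    have h2 : 0 ≤ h t ^ 2 := sq_nonneg _
    calc ‖h t ^ 2 * v t‖ = h t ^ 2 * ‖v t‖ := by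
          rw [norm_mul, Real.norm_eq_abs (h t ^ 2), abs_of_nonneg h2]
      _ ≤ h t ^ 2 * Mv := by nlinarith
      _ = Mv * h t ^ 2 := by ring
  -- the product kernel
  set f0 : ℝ × ℝ → ℝ := fun q => h q.2 ^ 2 * P q.1 with hf0def
  set F : ℝ → ℝ → ℝ := fun t ξ => Set.indicator {q : ℝ × ℝ | q.2 ≤ q.1} f0 (t, ξ) with hFdef
  have hsmeas : MeasurableSet {q : ℝ × ℝ | q.2 ≤ q.1} :=
    measurableSet_le measurable_snd measurable_fst
  have huncurry : Function.uncurry F = Set.indicator {q : ℝ × ℝ | q.2 ≤ q.1} f0 := by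
    ext ⟨t, ξ⟩; rfl
  have hf0m : AEStronglyMeasurable f0 (μ.prod μ) := by
    have h1 : AEStronglyMeasurable (fun q : ℝ × ℝ => h q.2 ^ 2) (μ.prod μ) := hh2m.comp_snd
    exact h1.mul hPm.comp_fst
  have hFm : AEStronglyMeasurable (Function.uncurry F) (μ.prod μ) := by
    rw [huncurry]; exact hf0m.indicator hsmeas
  have hdom : Integrable (fun q : ℝ × ℝ => M * h q.2 ^ 2) (μ.prod μ) := by
    have h1 : AEStronglyMeasurable (fun q : ℝ × ℝ => h q.2 ^ 2) (μ.prod μ) := hh2m.comp_snd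
    have h2 : Integrable (fun q : ℝ × ℝ => h q.2 ^ 2) (μ.prod μ) := by
      refine (integrable_prod_iff h1).mpr ⟨?_, ?_⟩
      · exact Filter.Eventually.of_forall fun x => (hsq : Integrable _ μ)
      · exact integrable_const (∫ y, ‖h y ^ 2‖ ∂μ)
    exact h2.const_mul M
  have hFint : Integrable (Function.uncurry F) (μ.prod μ) := by
    refine hdom.mono' hFm ?_
    have hprod : μ.prod μ = (volume.prod volume).restrict (Ioo a b ×ˢ Ioo a b) :=
      Measure.prod_restrict _ _
    rw [hprod]
    filter_upwards [ae_restrict_mem (hmeas.prod hmeas)] with q hq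
    have hq1 : q.1 ∈ Icc a b := Ioo_subset_Icc_self hq.1
    have hb1 : ‖Function.uncurry F q‖ ≤ ‖f0 q‖ := by
      rw [huncurry]; exact norm_indicator_le_norm_self _ _
    refine hb1.trans ?_
    have : ‖f0 q‖ = h q.2 ^ 2 * ‖P q.1‖ := by
      rw [hf0def]
      simp only [norm_mul, Real.norm_eq_abs (h q.2 ^ 2), abs_of_nonneg (sq_nonneg (h q.2))]
    rw [this]
    have := hM q.1 hq1
    nlinarith [sq_nonneg (h q.2)]
  -- inner integral computations
  have hleft : ∀ t ∈ Ioo a b, (∫ ξ, F t ξ ∂μ) = E t * P t := by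
    intro t ht
    have hfun : (fun ξ => F t ξ) = Set.indicator (Iic t) (fun ξ => h ξ ^ 2 * P t) := by
      ext ξ
      by_cases hξ : ξ ≤ t
      · simp [hFdef, hf0def, Set.indicator_apply, hξ]
      · simp [hFdef, hf0def, Set.indicator_apply, hξ]
    rw [hfun, integral_indicator measurableSet_Iic, hμdef,
      Measure.restrict_restrict measurableSet_Iic]
    have hset : Iic t ∩ Ioo a b = Ioc a t := by
      ext x
      constructor
      · rintro ⟨hx1, hx2, _⟩; exact ⟨hx2, hx1⟩
      · rintro ⟨hx1, hx2⟩; exact ⟨hx2, hx1, lt_of_le_of_lt hx2 ht.2⟩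
    rw [hset, integral_mul_const]
  have hright : ∀ ξ ∈ Ioo a b, (∫ t, F t ξ ∂μ) = h ξ ^ 2 * ∫ t in Ico ξ b, P t := by
    intro ξ hξ
    have hfun : (fun t => F t ξ) = Set.indicator (Ici ξ) (fun t => h ξ ^ 2 * P t) := by
      ext t
      by_cases hξt : ξ ≤ t
      · simp [hFdef, hf0def, Set.indicator_apply, hξt]
      · simp [hFdef, hf0def, Set.indicator_apply, hξt]
    rw [hfun, integral_indicator measurableSet_Ici, hμdef,
      Measure.restrict_restrict measurableSet_Ici]
    have hset : Ici ξ ∩ Ioo a b = Ico ξ b := by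
      ext x
      constructor
      · rintro ⟨hx1, _, hx2⟩; exact ⟨hx1, hx2⟩
      · rintro ⟨hx1, hx2⟩; exact ⟨hx1, lt_of_lt_of_le hξ.1 hx1, hx2⟩
    rw [hset, MeasureTheory.integral_const_mul]
  -- the key weight integral bound
  have hQ : ∀ ξ ∈ Ioo a b, (∫ t in Ico ξ b, P t) ≤ v ξ * (1 / (2 * c)) := by
    intro ξ hξ
    have hξb : ξ ≤ b := hξ.2.le
    have hIco : (∫ t in Ico ξ b, P t) = ∫ t in ξ..b, P t := by
      rw [intervalIntegral.integral_of_le hξb, integral_Ioc_eq_integral_Ioo,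
        integral_Ico_eq_integral_Ioo]
    rw [hIco]
    have hPint : IntervalIntegrable P volume ξ b := by
      apply ContinuousOn.intervalIntegrable
      apply hPcont.mono
      rw [uIcc_of_le hξb]
      exact Icc_subset_Icc hξ.1.le le_rfl
    have hmajcont : Continuous fun t : ℝ =>
        v ξ * ((t - a) * Real.exp (-(c * ((t - a) ^ 2 - (ξ - a) ^ 2)))) := by fun_prop
    have hmono : ∫ t in ξ..b, P t ≤
        ∫ t in ξ..b, v ξ * ((t - a) * Real.exp (-(c * ((t - a) ^ 2 - (ξ - a) ^ 2)))) := by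
      apply intervalIntegral.integral_mono_on hξb hPint (hmajcont.intervalIntegrable _ _)
      intro t ht
      have hta : 0 ≤ t - a := by
        have := hξ.1
        have := ht.1
        linarith
      have := hvdec ξ t hξ.1.le ht.1 ht.2
      calc P t = (t - a) * v t := rfl
        _ ≤ (t - a) * (v ξ * Real.exp (-(c * ((t - a) ^ 2 - (ξ - a) ^ 2)))) :=
            mul_le_mul_of_nonneg_left this hta
        _ = v ξ * ((t - a) * Real.exp (-(c * ((t - a) ^ 2 - (ξ - a) ^ 2)))) := by ring
    refine hmono.trans ?_
    rw [intervalIntegral.integral_const_mul]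
    have hvξ : 0 ≤ v ξ := hv0 ξ (Ioo_subset_Icc_self hξ)
    exact mul_le_mul_of_nonneg_left (KT_ftc a c ξ b hc hξb) hvξ
  -- integrability of both sides of step 1
  have int1 : IntegrableOn (fun t => I t ^ 2 * v t) (Ioo a b) volume :=
    (((hIcont.pow 2).mul hvc).integrableOn_Icc).mono_set Ioo_subset_Icc_self
  have int2 : IntegrableOn (fun t => E t * P t) (Ioo a b) volume :=
    ((hEcont.mul hPcont).integrableOn_Icc).mono_set Ioo_subset_Icc_self
  -- assemble
  calc ∫ t in Ioo a b, I t ^ 2 * v t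
      ≤ ∫ t in Ioo a b, E t * P t := by
        refine setIntegral_mono_on int1 int2 hmeas ?_
        intro t ht
        have hvt : 0 ≤ v t := hv0 t (Ioo_subset_Icc_self ht)
        have := hCS t ht
        calc I t ^ 2 * v t ≤ ((t - a) * E t) * v t := mul_le_mul_of_nonneg_right this hvt
          _ = E t * P t := by rw [hPdef]; ring
    _ = ∫ t, (∫ ξ, F t ξ ∂μ) ∂μ := by
        refine integral_congr_ae ?_
        filter_upwards [ae_restrict_mem hmeas] with t ht
        exact (hleft t ht).symm
    _ = ∫ ξ, (∫ t, F t ξ ∂μ) ∂μ := integral_integral_swap hFint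
    _ ≤ ∫ ξ, (1 / (2 * c)) * (h ξ ^ 2 * v ξ) ∂μ := by
        refine integral_mono_ae hFint.integral_prod_right ((hsqv.const_mul _)) ?_
        filter_upwards [ae_restrict_mem hmeas] with ξ hξ
        rw [hright ξ hξ]
        have hQξ := hQ ξ hξ
        have h2 : 0 ≤ h ξ ^ 2 := sq_nonneg _
        calc h ξ ^ 2 * ∫ t in Ico ξ b, P t ≤ h ξ ^ 2 * (v ξ * (1 / (2 * c))) :=
              mul_le_mul_of_nonneg_left hQξ h2
          _ = (1 / (2 * c)) * (h ξ ^ 2 * v ξ) := by ring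
    _ = (1 / (2 * c)) * ∫ t in Ioo a b, h t ^ 2 * v t := MeasureTheory.integral_const_mul _ _

/-- **Lemma 3.1** (Klibanov–Timonov). Let `T = 2θ` and let `φ̃ ∈ C¹([0,T²])` satisfy
`φ̃' ≤ -κ₀ < 0` on `[0,T²]`. Then for every `g ∈ L²(0,T)` and every `s > 0`,
`∫₀ᵀ (∫_θ^t g)² e^{2sφ̃((t-θ)²)} dt ≤ (1/(4sκ₀)) ∫₀ᵀ g² e^{2sφ̃((t-θ)²)} dt`. -/
theorem integral_weight_estimate
    (T θ : ℝ) (hT : 0 < T) (hθ : T = 2 * θ)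
    (φ : ℝ → ℝ) (hφ : ContDiffOn ℝ 1 φ (Set.Icc 0 (T ^ 2)))
    (κ₀ : ℝ) (hκ₀ : 0 < κ₀)
    (hφ' : ∀ t ∈ Set.Icc 0 (T ^ 2), deriv φ t ≤ -κ₀)
    (g : ℝ → ℝ)
    (hg : MemLp g 2 (volume.restrict (Set.Ioo 0 T)))
    (s : ℝ) (hs : 0 < s) :
    ∫ t in Set.Ioo 0 T, (∫ ξ in θ..t, g ξ) ^ 2 * Real.exp (2 * s * φ ((t - θ) ^ 2))
      ≤ (1 / (4 * s * κ₀)) *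
        ∫ t in Set.Ioo 0 T, (g t) ^ 2 * Real.exp (2 * s * φ ((t - θ) ^ 2)) := by
  have hθpos : 0 < θ := by linarith
  have hθT : θ < T := by linarith
  set w : ℝ → ℝ := fun t => Real.exp (2 * s * φ ((t - θ) ^ 2)) with hwdef
  -- decay property of φ
  have hφd : ∀ x y : ℝ, 0 ≤ x → x ≤ y → y ≤ T ^ 2 → φ y - φ x ≤ -κ₀ * (y - x) := by
    intro x y hx hxy hy
    have hdiff : DifferentiableOn ℝ φ (Icc 0 (T ^ 2)) := hφ.differentiableOn one_ne_zero
    have hanti : AntitoneOn (fun z => φ z + κ₀ * z) (Icc (0:ℝ) (T ^ 2)) := by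
      apply antitoneOn_of_deriv_nonpos (convex_Icc _ _)
      · exact hφ.continuousOn.add (continuous_const.mul continuous_id).continuousOn
      · intro z hz
        rw [interior_Icc] at hz
        have hφz : DifferentiableAt ℝ φ z :=
          (hdiff z (Ioo_subset_Icc_self hz)).differentiableAt (Icc_mem_nhds hz.1 hz.2)
        exact (hφz.add (by fun_prop)).differentiableWithinAt
      · intro z hz
        rw [interior_Icc] at hz
        have hφz : DifferentiableAt ℝ φ z :=
          (hdiff z (Ioo_subset_Icc_self hz)).differentiableAt (Icc_mem_nhds hz.1 hz.2)
        have hder : deriv (fun z => φ z + κ₀ * z) z = deriv φ z + κ₀ := by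
          have h2 : HasDerivAt (fun z : ℝ => κ₀ * z) κ₀ z := by
            simpa using (hasDerivAt_id z).const_mul κ₀
          exact (hφz.hasDerivAt.add h2).deriv
        rw [hder]
        have := hφ' z (Ioo_subset_Icc_self hz)
        linarith
    have := hanti ⟨hx, hxy.trans hy⟩ ⟨hx.trans hxy, hy⟩ hxy
    simp only at this
    linarith
  -- weight is continuous, nonnegative, and exponentially decaying
  have hsq_mem : ∀ t ∈ Icc (0:ℝ) T, ((t - θ) ^ 2) ∈ Icc (0:ℝ) (T ^ 2) := by
    intro t ht
    constructor
    · positivity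
    · nlinarith [ht.1, ht.2]
  have hwcont : ContinuousOn w (Icc 0 T) := by
    apply Real.continuous_exp.comp_continuousOn
    apply ContinuousOn.mul continuousOn_const
    exact hφ.continuousOn.comp
      ((continuous_id.sub continuous_const).pow 2).continuousOn hsq_mem
  have hw0 : ∀ t : ℝ, 0 ≤ w t := fun t => (Real.exp_pos _).le
  have hwdec : ∀ ξ t : ℝ, θ ≤ ξ → ξ ≤ t → t ≤ T →
      w t ≤ w ξ * Real.exp (-(2 * s * κ₀ * ((t - θ) ^ 2 - (ξ - θ) ^ 2))) := by
    intro ξ t hθξ hξt htT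
    have h1 : (0:ℝ) ≤ (ξ - θ) ^ 2 := sq_nonneg _
    have h2 : (ξ - θ) ^ 2 ≤ (t - θ) ^ 2 := by nlinarith
    have h3 : (t - θ) ^ 2 ≤ T ^ 2 := by nlinarith
    have hd := hφd _ _ h1 h2 h3
    rw [hwdef, ← Real.exp_add]
    apply Real.exp_le_exp.mpr
    nlinarith [mul_le_mul_of_nonneg_left hd (by positivity : (0:ℝ) ≤ 2 * s)]
  -- Right half
  have hc : (0:ℝ) < 2 * s * κ₀ := by positivity
  have hconst : (1:ℝ) / (2 * (2 * s * κ₀)) = 1 / (4 * s * κ₀) := by ring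
  have hgr : MemLp g 2 (volume.restrict (Ioo θ T)) :=
    hg.mono_measure (Measure.restrict_mono (Ioo_subset_Ioo hθpos.le le_rfl) le_rfl)
  have hright : ∫ t in Ioo θ T, (∫ ξ in θ..t, g ξ) ^ 2 * w t
      ≤ (1 / (4 * s * κ₀)) * ∫ t in Ioo θ T, g t ^ 2 * w t := by
    rw [← hconst]
    exact KT_half θ T (2 * s * κ₀) hθT hc w
      (hwcont.mono (Icc_subset_Icc hθpos.le le_rfl)) (fun t _ => hw0 t) hwdec g hgr
  -- Left half, via the reflection u ↦ T - u
  have mp : MeasurePreserving (fun u : ℝ => T - u) volume volume := by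
    have h1 := Measure.measurePreserving_neg (volume : Measure ℝ)
    have h2 := measurePreserving_add_left (volume : Measure ℝ) T
    simpa [Function.comp_def, sub_eq_add_neg] using h2.comp h1
  have hpre : (fun u : ℝ => T - u) ⁻¹' (Ioo 0 θ) = Ioo θ T := by
    ext u
    simp only [mem_preimage, mem_Ioo]
    constructor
    · rintro ⟨h1, h2⟩; constructor <;> linarith
    · rintro ⟨h1, h2⟩; constructor <;> linarith
  have hres : MeasurePreserving (fun u : ℝ => T - u)
      (volume.restrict (Ioo θ T)) (volume.restrict (Ioo 0 θ)) := by
    have := mp.restrict_preimage (s := Ioo 0 θ) measurableSet_Ioo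
    rwa [hpre] at this
  have hgl : MemLp g 2 (volume.restrict (Ioo 0 θ)) :=
    hg.mono_measure (Measure.restrict_mono (Ioo_subset_Ioo le_rfl hθT.le) le_rfl)
  have hgref : MemLp (fun ξ => g (T - ξ)) 2 (volume.restrict (Ioo θ T)) :=
    hgl.comp_measurePreserving hres
  have hkey : ∫ t in Ioo θ T, (∫ ξ in θ..t, g (T - ξ)) ^ 2 * w t
      ≤ (1 / (4 * s * κ₀)) * ∫ t in Ioo θ T, (g (T - t)) ^ 2 * w t := by
    rw [← hconst]
    exact KT_half θ T (2 * s * κ₀) hθT hc w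
      (hwcont.mono (Icc_subset_Icc hθpos.le le_rfl)) (fun t _ => hw0 t) hwdec _ hgref
  -- reflection identities
  have hwsymm : ∀ u : ℝ, w (T - u) = w u := by
    intro u
    have harg : (T - u - θ) ^ 2 = (u - θ) ^ 2 := by rw [hθ]; ring
    simp only [hwdef]
    rw [harg]
  have hIref : ∀ u : ℝ, (∫ ξ in θ..u, g (T - ξ)) = -∫ ξ in θ..(T - u), g ξ := by
    intro u
    rw [intervalIntegral.integral_comp_sub_left g T]
    rw [show T - θ = θ by linarith]
    exact intervalIntegral.integral_symm θ (T - u)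
  have E1 : ∫ t in Ioo 0 θ, (∫ ξ in θ..t, g ξ) ^ 2 * w t
      = ∫ t in Ioo θ T, (∫ ξ in θ..t, g (T - ξ)) ^ 2 * w t := by
    rw [← integral_Ioc_eq_integral_Ioo, ← intervalIntegral.integral_of_le hθpos.le]
    rw [← integral_Ioc_eq_integral_Ioo, ← intervalIntegral.integral_of_le hθT.le]
    have := intervalIntegral.integral_comp_sub_left
      (fun t => (∫ ξ in θ..t, g ξ) ^ 2 * w t) T (a := θ) (b := T)
    rw [show T - T = 0 by ring, show T - θ = θ by linarith] at this
    rw [← this]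
    apply intervalIntegral.integral_congr
    intro u _
    simp only
    rw [hwsymm u, hIref u, neg_sq]
  have E2 : ∫ t in Ioo 0 θ, g t ^ 2 * w t = ∫ t in Ioo θ T, (g (T - t)) ^ 2 * w t := by
    rw [← integral_Ioc_eq_integral_Ioo, ← intervalIntegral.integral_of_le hθpos.le]
    rw [← integral_Ioc_eq_integral_Ioo, ← intervalIntegral.integral_of_le hθT.le]
    have := intervalIntegral.integral_comp_sub_left
      (fun t => g t ^ 2 * w t) T (a := θ) (b := T)
    rw [show T - T = 0 by ring, show T - θ = θ by linarith] at this
    rw [← this]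
    apply intervalIntegral.integral_congr
    intro u _
    simp only
    rw [hwsymm u]
  have hleft : ∫ t in Ioo 0 θ, (∫ ξ in θ..t, g ξ) ^ 2 * w t
      ≤ (1 / (4 * s * κ₀)) * ∫ t in Ioo 0 θ, g t ^ 2 * w t := by
    rw [E1, E2]
    exact hkey
  -- integrability of both global integrands, to split the integrals
  have hgT : IntegrableOn g (Ioo 0 T) volume := hg.integrable one_le_two
  have hIcc_ae : (Icc (0:ℝ) T : Set ℝ) =ᵐ[volume] Ioo 0 T := Ioo_ae_eq_Icc.symm
  have hgIcc : IntegrableOn g (Icc 0 T) volume := by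
    rwa [IntegrableOn, Measure.restrict_congr_set hIcc_ae]
  have hIT : IntervalIntegrable g volume 0 T := by
    rw [intervalIntegrable_iff_integrableOn_Ioc_of_le hT.le]
    rwa [IntegrableOn, ← Measure.restrict_congr_set Ioo_ae_eq_Ioc]
  have hIcont : ContinuousOn (fun t => ∫ ξ in θ..t, g ξ) (Icc 0 T) := by
    have := intervalIntegral.continuousOn_primitive_interval' (μ := volume)
      (b₁ := 0) (b₂ := T) (a := θ) hIT (by rw [uIcc_of_le hT.le]; exact ⟨hθpos.le, hθT.le⟩)
    rwa [uIcc_of_le hT.le] at this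
  have hLcont : ContinuousOn (fun t => (∫ ξ in θ..t, g ξ) ^ 2 * w t) (Icc 0 T) :=
    (hIcont.pow 2).mul hwcont
  have hLint : IntegrableOn (fun t => (∫ ξ in θ..t, g ξ) ^ 2 * w t) (Ioo 0 T) volume :=
    hLcont.integrableOn_Icc.mono_set Ioo_subset_Icc_self
  obtain ⟨Mw, hMw⟩ := isCompact_Icc.exists_bound_of_continuousOn hwcont
  have hsqT : IntegrableOn (fun t => g t ^ 2) (Ioo 0 T) volume := by
    exact hg.integrable_sq
  have hwm : AEStronglyMeasurable w (volume.restrict (Ioo 0 T)) :=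
    (hwcont.mono Ioo_subset_Icc_self).aestronglyMeasurable measurableSet_Ioo
  have hg2m : AEStronglyMeasurable (fun t => g t ^ 2) (volume.restrict (Ioo 0 T)) := by
    have := hg.1.mul hg.1
    exact this.congr (Filter.Eventually.of_forall fun t => by simp [sq])
  have hRint : IntegrableOn (fun t => g t ^ 2 * w t) (Ioo 0 T) volume := by
    refine Integrable.mono' (hsqT.const_mul Mw) (hg2m.mul hwm) ?_
    filter_upwards [ae_restrict_mem measurableSet_Ioo] with t ht
    have h1 : ‖w t‖ ≤ Mw := hMw t (Ioo_subset_Icc_self ht)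
    have h2 : (0:ℝ) ≤ g t ^ 2 := sq_nonneg _
    calc ‖g t ^ 2 * w t‖ = g t ^ 2 * ‖w t‖ := by
          rw [norm_mul, Real.norm_eq_abs (g t ^ 2), abs_of_nonneg h2]
      _ ≤ g t ^ 2 * Mw := by nlinarith
      _ = Mw * g t ^ 2 := by ring
  -- split both integrals at θ
  have hsplit : ∀ f : ℝ → ℝ, IntegrableOn f (Ioo 0 T) volume →
      ∫ t in Ioo 0 T, f t = (∫ t in Ioo 0 θ, f t) + ∫ t in Ioo θ T, f t := by
    intro f hf
    have h1 : IntervalIntegrable f volume 0 θ := by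
      rw [intervalIntegrable_iff_integrableOn_Ioc_of_le hθpos.le]
      exact hf.mono_set fun x hx => ⟨hx.1, lt_of_le_of_lt hx.2 hθT⟩
    have h2 : IntervalIntegrable f volume θ T := by
      rw [intervalIntegrable_iff_integrableOn_Ioc_of_le hθT.le]
      have : IntegrableOn f (Ioo θ T) volume :=
        hf.mono_set fun x hx => ⟨hθpos.trans hx.1, hx.2⟩
      rwa [IntegrableOn, ← Measure.restrict_congr_set Ioo_ae_eq_Ioc]
    rw [← integral_Ioc_eq_integral_Ioo, ← intervalIntegral.integral_of_le hT.le,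
      ← intervalIntegral.integral_add_adjacent_intervals h1 h2,
      intervalIntegral.integral_of_le hθpos.le, intervalIntegral.integral_of_le hθT.le,
      integral_Ioc_eq_integral_Ioo, integral_Ioc_eq_integral_Ioo]
  rw [hsplit _ hLint, hsplit _ hRint, mul_add]
  exact add_le_add hleft hright
end

section
/- Let T > 0, θ = T/2, and 0 < δ < θ. Let α ∈ C(Ω̄) satisfy α > 0 on Ω̄ and define η(x,t) = α(x)/((t−δ)(T−δ−t)) for x ∈ Ω and δ < t < T−δ. Then there exists a positive constant κ (depending on α, δ, T, Ω) such that for every s > 0 and every q ∈ L²(Ω×(δ,T−δ)), ∫_δ^{T−δ} ∫_Ω | ∫_θ^t q(x,ξ) dξ |² e^{−2sη(x,t)} dx dt ≤ (κ/s) ∫_δ^{T−δ} ∫_Ω |q(x,t)|² e^{−2sη(x,t)} dx dt. -/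
open MeasureTheory Real Set
open scoped ENNReal
open scoped Interval


lemma cs_lemma {α : Type*} [MeasurableSpace α] (μ : Measure α) (f : α → ℝ≥0∞)
    (hf : AEMeasurable f μ) :
    (∫⁻ a, f a ∂μ) ^ 2 ≤ μ univ * ∫⁻ a, f a ^ 2 ∂μ := by
  have h22 : (2:ℝ).HolderConjugate 2 :=
    (Real.holderConjugate_iff_eq_conjExponent (by norm_num)).mpr (by norm_num)
  have h := ENNReal.lintegral_mul_le_Lp_mul_Lq μ h22 hf
    (aemeasurable_const (b := (1:ℝ≥0∞)))
  simp only [mul_one, Pi.mul_apply, Pi.one_apply, ENNReal.one_rpow, lintegral_const,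
    one_mul] at h
  have h2 : (∫⁻ a, f a ∂μ) ^ (2:ℝ) ≤
      ((∫⁻ a, f a ^ (2:ℝ) ∂μ) ^ (1/(2:ℝ)) * (μ univ) ^ (1/(2:ℝ))) ^ (2:ℝ) :=
    ENNReal.rpow_le_rpow h (by norm_num)
  rw [ENNReal.mul_rpow_of_nonneg _ _ (by norm_num), ← ENNReal.rpow_mul,
    ← ENNReal.rpow_mul] at h2
  norm_num at h2
  exact h2.trans_eq (mul_comm _ _)


lemma ftc_deriv (θ lam r : ℝ) (hlam : lam ≠ 0) (t : ℝ) :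
    HasDerivAt (fun t => -Real.exp (-(2*lam)*((t-θ)^2 - r^2)) / (4*lam))
      ((t - θ) * Real.exp (-(2*lam)*((t-θ)^2 - r^2))) t := by
  have h1 : HasDerivAt (fun t : ℝ => -(2*lam)*((t-θ)^2 - r^2)) (-(2*lam)*(2*(t-θ))) t := by
    have := (((hasDerivAt_id t).sub_const θ).pow 2).sub_const (r^2)
    simpa using this.const_mul (-(2*lam))
  have h2 := (h1.exp.neg).div_const (4*lam)
  refine h2.congr_deriv ?_
  field_simp
  ring

lemma ftc_right (θ lam r : ℝ) (hlam : 0 < lam) (u v : ℝ) :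
    ∫ t in u..v, (t - θ) * Real.exp (-(2*lam)*((t-θ)^2 - r^2)) =
      (Real.exp (-(2*lam)*((u-θ)^2 - r^2)) - Real.exp (-(2*lam)*((v-θ)^2 - r^2))) / (4*lam) := by
  have := intervalIntegral.integral_eq_sub_of_hasDerivAt
    (f := fun t => -Real.exp (-(2*lam)*((t-θ)^2 - r^2)) / (4*lam))
    (fun t _ => ftc_deriv θ lam r hlam.ne' t)
    (Continuous.intervalIntegrable (by continuity) u v)
  rw [this]; ring

lemma ftc_left (θ lam r : ℝ) (hlam : 0 < lam) (u v : ℝ) :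
    ∫ t in u..v, (θ - t) * Real.exp (-(2*lam)*((t-θ)^2 - r^2)) =
      (Real.exp (-(2*lam)*((v-θ)^2 - r^2)) - Real.exp (-(2*lam)*((u-θ)^2 - r^2))) / (4*lam) := by
  have h : ∀ t : ℝ, (θ - t) * Real.exp (-(2*lam)*((t-θ)^2 - r^2))
      = -((t - θ) * Real.exp (-(2*lam)*((t-θ)^2 - r^2))) := fun t => by ring
  simp_rw [h]
  rw [intervalIntegral.integral_neg, ftc_right θ lam r hlam u v]
  ring

lemma piece_bound_right (θ lam r c d : ℝ) (hlam : 0 < lam) (hc : θ + |r| ≤ d) :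
    (∫⁻ t in Icc (θ + |r|) d,
        ENNReal.ofReal (|t - θ| * Real.exp (-(2*lam)*((t-θ)^2 - r^2))))
      ≤ ENNReal.ofReal (1/(4*lam)) := by
  have hInt : IntegrableOn (fun t => |t - θ| * Real.exp (-(2*lam)*((t-θ)^2 - r^2)))
      (Icc (θ + |r|) d) := (Continuous.integrableOn_Icc (by continuity))
  rw [← MeasureTheory.ofReal_integral_eq_lintegral_ofReal hInt
    (Filter.Eventually.of_forall fun t => by positivity)]
  apply ENNReal.ofReal_le_ofReal
  rw [MeasureTheory.integral_Icc_eq_integral_Ioc, ← intervalIntegral.integral_of_le hc]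
  have hcongr : EqOn (fun t => |t - θ| * Real.exp (-(2*lam)*((t-θ)^2 - r^2)))
      (fun t => (t - θ) * Real.exp (-(2*lam)*((t-θ)^2 - r^2))) (uIcc (θ + |r|) d) := by
    intro t ht
    rw [uIcc_of_le hc] at ht
    have h0 : (0:ℝ) ≤ t - θ := by nlinarith [ht.1, abs_nonneg r]
    show |t - θ| * _ = _
    rw [abs_of_nonneg h0]
  rw [intervalIntegral.integral_congr hcongr, ftc_right θ lam r hlam]
  have h1 : ((θ + |r|) - θ)^2 - r^2 = 0 := by
    have : ((θ + |r|) - θ)^2 = r^2 := by rw [show (θ + |r|) - θ = |r| by ring, sq_abs]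
    linarith
  rw [h1]
  have h2 : (0:ℝ) < Real.exp (-(2*lam)*((d-θ)^2 - r^2)) := Real.exp_pos _
  rw [mul_zero, Real.exp_zero]
  rw [div_le_div_iff₀ (by positivity) (by positivity)]
  nlinarith

lemma piece_bound_left (θ lam r c : ℝ) (hlam : 0 < lam) (hc : c ≤ θ - |r|) :
    (∫⁻ t in Icc c (θ - |r|),
        ENNReal.ofReal (|t - θ| * Real.exp (-(2*lam)*((t-θ)^2 - r^2))))
      ≤ ENNReal.ofReal (1/(4*lam)) := by
  have hInt : IntegrableOn (fun t => |t - θ| * Real.exp (-(2*lam)*((t-θ)^2 - r^2)))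
      (Icc c (θ - |r|)) := (Continuous.integrableOn_Icc (by continuity))
  rw [← MeasureTheory.ofReal_integral_eq_lintegral_ofReal hInt
    (Filter.Eventually.of_forall fun t => by positivity)]
  apply ENNReal.ofReal_le_ofReal
  rw [MeasureTheory.integral_Icc_eq_integral_Ioc, ← intervalIntegral.integral_of_le hc]
  have hcongr : EqOn (fun t => |t - θ| * Real.exp (-(2*lam)*((t-θ)^2 - r^2)))
      (fun t => (θ - t) * Real.exp (-(2*lam)*((t-θ)^2 - r^2))) (uIcc c (θ - |r|)) := by
    intro t ht
    rw [uIcc_of_le hc] at ht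
    have h0 : t - θ ≤ 0 := by nlinarith [ht.2, abs_nonneg r]
    show |t - θ| * _ = _
    rw [abs_of_nonpos h0, neg_sub]
  rw [intervalIntegral.integral_congr hcongr, ftc_left θ lam r hlam]
  have h1 : ((θ - |r|) - θ)^2 - r^2 = 0 := by
    have : ((θ - |r|) - θ)^2 = r^2 := by
      rw [show (θ - |r|) - θ = -|r| by ring, neg_sq, sq_abs]
    linarith
  rw [h1]
  have h2 : (0:ℝ) < Real.exp (-(2*lam)*((c-θ)^2 - r^2)) := Real.exp_pos _
  rw [mul_zero, Real.exp_zero]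
  rw [div_le_div_iff₀ (by positivity) (by positivity)]
  nlinarith

lemma tint_bound (T δ lam : ℝ) (hδ : 0 < δ) (hδθ : δ < T/2) (hlam : 0 < lam)
    {ξ : ℝ} (hξ : ξ ∈ Ioo δ (T - δ)) :
    (∫⁻ t in Ioo δ (T-δ), if (ξ - T/2)^2 ≤ (t - T/2)^2 then
      ENNReal.ofReal (|t - T/2| * Real.exp (-(2*lam)*((t-T/2)^2 - (ξ-T/2)^2))) else 0)
      ≤ ENNReal.ofReal (1/(2*lam)) := by
  have hrw : ∀ t : ℝ, (if (ξ - T/2)^2 ≤ (t - T/2)^2 then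
      ENNReal.ofReal (|t - T/2| * Real.exp (-(2*lam)*((t-T/2)^2 - (ξ-T/2)^2))) else 0)
      = {u : ℝ | (ξ - T/2)^2 ≤ (u - T/2)^2}.indicator
        (fun u => ENNReal.ofReal (|u - T/2| *
          Real.exp (-(2*lam)*((u-T/2)^2 - (ξ-T/2)^2)))) t := fun t => rfl
  simp_rw [hrw]
  set θ := T/2 with hθ
  have hS : MeasurableSet {u : ℝ | (ξ-θ)^2 ≤ (u-θ)^2} :=
    measurableSet_le measurable_const (by fun_prop)
  rw [lintegral_indicator hS, Measure.restrict_restrict hS]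
  have hrabs : |ξ - θ| ≤ θ - δ := by
    rw [abs_le]
    constructor <;> [(linarith [hξ.1]); (linarith [hξ.2])]
  have hsub : {u : ℝ | (ξ-θ)^2 ≤ (u-θ)^2} ∩ Ioo δ (T-δ)
      ⊆ Icc δ (θ - |ξ-θ|) ∪ Icc (θ + |ξ-θ|) (T-δ) := by
    rintro t ⟨ht1, ht2⟩
    simp only [mem_setOf_eq] at ht1
    have habs : |ξ - θ| ≤ |t - θ| := by
      nlinarith [sq_abs (ξ-θ), sq_abs (t-θ), abs_nonneg (ξ-θ), abs_nonneg (t-θ)]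
    rcases abs_cases (t - θ) with ⟨h1, _⟩ | ⟨h1, _⟩
    · right
      exact ⟨by linarith, le_of_lt ht2.2⟩
    · left
      exact ⟨le_of_lt ht2.1, by linarith⟩
  calc (∫⁻ t in {u : ℝ | (ξ-θ)^2 ≤ (u-θ)^2} ∩ Ioo δ (T-δ),
          ENNReal.ofReal (|t - θ| * Real.exp (-(2*lam)*((t-θ)^2 - (ξ-θ)^2))))
      ≤ ∫⁻ t in Icc δ (θ - |ξ-θ|) ∪ Icc (θ + |ξ-θ|) (T-δ),
          ENNReal.ofReal (|t - θ| * Real.exp (-(2*lam)*((t-θ)^2 - (ξ-θ)^2))) :=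
        lintegral_mono_set hsub
    _ ≤ (∫⁻ t in Icc δ (θ - |ξ-θ|),
          ENNReal.ofReal (|t - θ| * Real.exp (-(2*lam)*((t-θ)^2 - (ξ-θ)^2))))
        + ∫⁻ t in Icc (θ + |ξ-θ|) (T-δ),
          ENNReal.ofReal (|t - θ| * Real.exp (-(2*lam)*((t-θ)^2 - (ξ-θ)^2))) :=
        lintegral_union_le _ _ _
    _ ≤ ENNReal.ofReal (1/(4*lam)) + ENNReal.ofReal (1/(4*lam)) := by
        gcongr
        · exact piece_bound_left θ lam (ξ-θ) δ hlam (by linarith)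
        · exact piece_bound_right θ lam (ξ-θ) δ (T-δ) hlam (by linarith)
    _ = ENNReal.ofReal (1/(2*lam)) := by
        rw [← ENNReal.ofReal_add (by positivity) (by positivity)]
        congr 1
        field_simp
        ring


lemma weight_mono (T δ s a b lam t ξ : ℝ) (hδ : 0 < δ) (hδθ : δ < T/2) (hs : 0 < s)
    (ha : 0 < a) (hab : a ≤ b) (hlam : lam = s * a / (T/2 - δ)^4)
    (ht : t ∈ Ioo δ (T-δ)) (hξ : ξ ∈ Ioo δ (T-δ)) (hΔ : (ξ-T/2)^2 ≤ (t-T/2)^2) :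
    Real.exp (-2*s*(b/((t-δ)*(T-δ-t)))) ≤
      Real.exp (-2*s*(b/((ξ-δ)*(T-δ-ξ)))) *
        Real.exp (-(2*lam)*((t-T/2)^2 - (ξ-T/2)^2)) := by
  rw [← Real.exp_add, Real.exp_le_exp]
  set θ := T/2 with hθ
  have hΔ0 : 0 ≤ (t-θ)^2 - (ξ-θ)^2 := by linarith
  have hDt : 0 < (t-δ)*(T-δ-t) := mul_pos (by linarith [ht.1]) (by linarith [ht.2])
  have hDξ : 0 < (ξ-δ)*(T-δ-ξ) := mul_pos (by linarith [hξ.1]) (by linarith [hξ.2])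
  have hDt_le : (t-δ)*(T-δ-t) ≤ (θ-δ)^2 := by
    have : (t-δ)*(T-δ-t) = (θ-δ)^2 - (t-θ)^2 := by rw [hθ]; ring
    nlinarith [sq_nonneg (t-θ)]
  have hDξ_le : (ξ-δ)*(T-δ-ξ) ≤ (θ-δ)^2 := by
    have : (ξ-δ)*(T-δ-ξ) = (θ-δ)^2 - (ξ-θ)^2 := by rw [hθ]; ring
    nlinarith [sq_nonneg (ξ-θ)]
  have hb : 0 < b := lt_of_lt_of_le ha hab
  have hprod_pos : 0 < ((ξ-δ)*(T-δ-ξ)) * ((t-δ)*(T-δ-t)) := mul_pos hDξ hDt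
  have hprod_le : ((ξ-δ)*(T-δ-ξ)) * ((t-δ)*(T-δ-t)) ≤ (θ-δ)^4 := by
    calc ((ξ-δ)*(T-δ-ξ)) * ((t-δ)*(T-δ-t)) ≤ (θ-δ)^2 * (θ-δ)^2 :=
          mul_le_mul hDξ_le hDt_le (le_of_lt hDt) (by positivity)
      _ = (θ-δ)^4 := by ring
  have key : b/((t-δ)*(T-δ-t)) - b/((ξ-δ)*(T-δ-ξ))
      = b * ((t-θ)^2 - (ξ-θ)^2) / (((ξ-δ)*(T-δ-ξ)) * ((t-δ)*(T-δ-t))) := by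
    rw [div_sub_div _ _ (ne_of_gt hDt) (ne_of_gt hDξ)]
    rw [mul_comm ((t-δ)*(T-δ-t)) ((ξ-δ)*(T-δ-ξ))]
    congr 1
    have h1 : (t-δ)*(T-δ-t) = (θ-δ)^2 - (t-θ)^2 := by rw [hθ]; ring
    have h2 : (ξ-δ)*(T-δ-ξ) = (θ-δ)^2 - (ξ-θ)^2 := by rw [hθ]; ring
    rw [h1, h2]; ring
  have h1' : lam * ((t-θ)^2-(ξ-θ)^2)
      ≤ s*b*((t-θ)^2-(ξ-θ)^2)/(((ξ-δ)*(T-δ-ξ))*((t-δ)*(T-δ-t))) := by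
    rw [hlam]
    calc s*a/(θ-δ)^4 * ((t-θ)^2-(ξ-θ)^2) = s*a*((t-θ)^2-(ξ-θ)^2)/(θ-δ)^4 := by ring
      _ ≤ s*b*((t-θ)^2-(ξ-θ)^2)/(((ξ-δ)*(T-δ-ξ))*((t-δ)*(T-δ-t))) :=
          div_le_div₀ (mul_nonneg (by positivity) hΔ0) (mul_le_mul_of_nonneg_right (mul_le_mul_of_nonneg_left hab hs.le) hΔ0) hprod_pos hprod_le
  have hfin : lam * ((t-θ)^2-(ξ-θ)^2)
      ≤ s * (b/((t-δ)*(T-δ-t))) - s * (b/((ξ-δ)*(T-δ-ξ))) := by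
    have h3 : s * (b/((t-δ)*(T-δ-t))) - s * (b/((ξ-δ)*(T-δ-ξ)))
        = s * (b/((t-δ)*(T-δ-t)) - b/((ξ-δ)*(T-δ-ξ))) := by ring
    rw [h3, key]
    calc lam * ((t-θ)^2-(ξ-θ)^2)
        ≤ s*b*((t-θ)^2-(ξ-θ)^2)/(((ξ-δ)*(T-δ-ξ))*((t-δ)*(T-δ-t))) := h1'
      _ = s * (b * ((t-θ)^2 - (ξ-θ)^2) / (((ξ-δ)*(T-δ-ξ)) * ((t-δ)*(T-δ-t)))) := by ring
  linarith [hfin]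

lemma enn_sq (y : ℝ) : ENNReal.ofReal (y^2) = (‖y‖₊ : ℝ≥0∞)^2 := by
  rw [← sq_abs, ENNReal.ofReal_pow (abs_nonneg y), ← Real.enorm_eq_ofReal_abs]
  rfl

set_option maxHeartbeats 1000000 in
lemma carleman_aux {X : Type*} [MeasurableSpace X] (μX : Measure X) [SFinite μX]
    (T δ a s : ℝ) (hδ : 0 < δ) (hδθ : δ < T / 2) (ha : 0 < a) (hs : 0 < s)
    (A : X → ℝ) (hA : Measurable A) (hAa : ∀ᵐ x ∂μX, a ≤ A x)
    (q : X × ℝ → ℝ) (hq : Measurable q)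
    (hint : Integrable (fun p => q p ^ 2) (μX.prod (volume.restrict (Ioo δ (T - δ))))) :
    (∫ p, ((∫ ξ in (T / 2)..p.2, q (p.1, ξ)) ^ 2 *
          Real.exp (-2 * s * (A p.1 / ((p.2 - δ) * (T - δ - p.2)))))
        ∂(μX.prod (volume.restrict (Ioo δ (T - δ)))))
      ≤ ((T / 2 - δ) ^ 4 / (2 * a) / s) *
        ∫ p, (q p ^ 2 * Real.exp (-2 * s * (A p.1 / ((p.2 - δ) * (T - δ - p.2)))))
          ∂(μX.prod (volume.restrict (Ioo δ (T - δ)))) := by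
  have hθI : T / 2 ∈ Ioo δ (T - δ) := ⟨hδθ, by linarith⟩
  set ν := volume.restrict (Ioo δ (T - δ)) with hνdef
  set μ := μX.prod ν with hμdef
  set lam := s * a / (T / 2 - δ) ^ 4 with hlamdef
  have hθδ : 0 < T / 2 - δ := by linarith
  have hlam : 0 < lam := by positivity
  set w : X → ℝ → ℝ := fun x t => Real.exp (-2 * s * (A x / ((t - δ) * (T - δ - t))))
    with hwdef
  set G : X × ℝ → ℝ := fun p => q p ^ 2 * w p.1 p.2 with hGdef
  set F : X × ℝ → ℝ := fun p => (∫ ξ in (T / 2)..p.2, q (p.1, ξ)) ^ 2 * w p.1 p.2 with hFdef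
  show ∫ p, F p ∂μ ≤ ((T / 2 - δ) ^ 4 / (2 * a) / s) * ∫ p, G p ∂μ
  -- basic measurability
  have hwmeas : Measurable (fun p : X × ℝ => w p.1 p.2) := by
    apply Real.measurable_exp.comp
    apply Measurable.const_mul
    exact (hA.comp measurable_fst).div
      (((measurable_snd.sub measurable_const).mul
        (measurable_const.sub measurable_snd)))
  have hGmeas : Measurable G := (hq.pow_const 2).mul hwmeas
  have hw_pos : ∀ x t, 0 < w x t := fun x t => Real.exp_pos _
  have hmemI : ∀ᵐ p : X × ℝ ∂μ, p.2 ∈ Ioo δ (T - δ) :=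
    Measure.quasiMeasurePreserving_snd.ae (ae_restrict_mem measurableSet_Ioo)
  have hA_ae : ∀ᵐ p : X × ℝ ∂μ, a ≤ A p.1 :=
    Measure.quasiMeasurePreserving_fst.ae hAa
  have hw_le_one : ∀ x t, a ≤ A x → t ∈ Ioo δ (T - δ) → w x t ≤ 1 := by
    intro x t hax ht
    rw [hwdef]
    simp only
    rw [Real.exp_le_one_iff]
    have hD : 0 < (t - δ) * (T - δ - t) := mul_pos (by linarith [ht.1]) (by linarith [ht.2])
    have hA0 : 0 < A x := lt_of_lt_of_le ha hax
    have : 0 ≤ A x / ((t - δ) * (T - δ - t)) := le_of_lt (div_pos hA0 hD)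
    nlinarith
  have hGnn : 0 ≤ᵐ[μ] G := Filter.Eventually.of_forall fun p =>
    mul_nonneg (sq_nonneg _) (hw_pos p.1 p.2).le
  have hGint : Integrable G μ := by
    refine hint.mono' hGmeas.aestronglyMeasurable ?_
    filter_upwards [hmemI, hA_ae] with p hp hap
    rw [Real.norm_eq_abs,
      abs_of_nonneg (mul_nonneg (sq_nonneg _) (hw_pos p.1 p.2).le)]
    calc q p ^ 2 * w p.1 p.2 ≤ q p ^ 2 * 1 := by
          have := hw_le_one p.1 p.2 hap hp
          gcongr
      _ = q p ^ 2 := mul_one _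
  -- the kernel
  set H : X × ℝ → ℝ → ℝ≥0∞ := fun p ξ =>
    (if (ξ - T/2)^2 ≤ (p.2 - T/2)^2 then
      ENNReal.ofReal (|p.2 - T/2| *
        Real.exp (-(2*lam)*((p.2-T/2)^2 - (ξ-T/2)^2))) else 0)
      * ENNReal.ofReal (q (p.1, ξ)^2 * w p.1 ξ) with hHdef
  have hcore : ∀ᵐ p ∂μ, ENNReal.ofReal (F p) ≤ ∫⁻ ξ in Ioo δ (T-δ), H p ξ := by
    filter_upwards [hmemI, hA_ae] with p htI hax
    obtain ⟨x, t⟩ := p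
    simp only at htI hax
    have hqx : Measurable fun ξ => q (x, ξ) := hq.comp measurable_prodMk_left
    have hsub : Ι (T/2) t ⊆ Ioo δ (T-δ) := by
      intro ξ hξ
      rw [Set.uIoc, Set.mem_Ioc] at hξ
      exact ⟨lt_of_lt_of_le (lt_min hθI.1 htI.1) hξ.1.le,
        lt_of_le_of_lt hξ.2 (max_lt hθI.2 htI.2)⟩
    have hΔξ : ∀ ξ ∈ Ι (T/2) t, (ξ-T/2)^2 ≤ (t-T/2)^2 := by
      intro ξ hξ
      rcases le_total (T/2) t with h | h
      · rw [Set.uIoc_of_le h, Set.mem_Ioc] at hξ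
        nlinarith [hξ.1, hξ.2]
      · rw [Set.uIoc_of_ge h, Set.mem_Ioc] at hξ
        nlinarith [hξ.1, hξ.2]
    have hvol : volume (Ι (T/2) t) = ENNReal.ofReal |t - T/2| := by
      rw [Set.uIoc, Real.volume_Ioc, max_sub_min_eq_abs, abs_sub_comm]
    calc ENNReal.ofReal (F (x, t))
        = (‖∫ ξ in (T/2)..t, q (x, ξ)‖₊ : ℝ≥0∞)^2 * ENNReal.ofReal (w x t) := by
          show ENNReal.ofReal ((∫ ξ in (T/2)..t, q (x, ξ))^2 * w x t) = _
          rw [ENNReal.ofReal_mul (sq_nonneg _), enn_sq]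
      _ ≤ (∫⁻ ξ in Ι (T/2) t, (‖q (x, ξ)‖₊ : ℝ≥0∞))^2 * ENNReal.ofReal (w x t) := by
          gcongr
          calc (‖∫ ξ in (T/2)..t, q (x, ξ)‖₊ : ℝ≥0∞)
              = (‖∫ ξ in Ι (T/2) t, q (x, ξ)‖₊ : ℝ≥0∞) := by
                rw [← enorm_eq_nnnorm, ← enorm_eq_nnnorm, ← ofReal_norm_eq_enorm, ← ofReal_norm_eq_enorm,
                  intervalIntegral.norm_intervalIntegral_eq]
            _ ≤ ∫⁻ ξ in Ι (T/2) t, ‖q (x, ξ)‖₊ :=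
                enorm_integral_le_lintegral_enorm _
      _ ≤ ((volume (Ι (T/2) t)) * ∫⁻ ξ in Ι (T/2) t, (‖q (x, ξ)‖₊ : ℝ≥0∞)^2)
            * ENNReal.ofReal (w x t) := by
          gcongr
          have := cs_lemma (volume.restrict (Ι (T/2) t)) (fun ξ => (‖q (x, ξ)‖₊ : ℝ≥0∞))
            (hqx.nnnorm.coe_nnreal_ennreal.aemeasurable)
          simpa [Measure.restrict_apply_univ] using this
      _ = ENNReal.ofReal (|t - T/2|) *
            ∫⁻ ξ in Ι (T/2) t, (‖q (x, ξ)‖₊ : ℝ≥0∞)^2 * ENNReal.ofReal (w x t) := by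
          rw [hvol, mul_assoc, lintegral_mul_const' _ _ ENNReal.ofReal_ne_top]
      _ ≤ ENNReal.ofReal (|t - T/2|) * ∫⁻ ξ in Ι (T/2) t,
            (ENNReal.ofReal (q (x,ξ)^2 * w x ξ) *
             ENNReal.ofReal (Real.exp (-(2*lam)*((t-T/2)^2 - (ξ-T/2)^2)))) := by
          refine mul_le_mul_right ?_ _
          apply setLIntegral_mono' measurableSet_uIoc
          intro ξ hξ
          have hξI : ξ ∈ Ioo δ (T-δ) := hsub hξ
          have hΔ : (ξ-T/2)^2 ≤ (t-T/2)^2 := hΔξ ξ hξ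
          calc (‖q (x, ξ)‖₊ : ℝ≥0∞)^2 * ENNReal.ofReal (w x t)
              = ENNReal.ofReal (q (x,ξ)^2) * ENNReal.ofReal (w x t) := by rw [enn_sq]
            _ ≤ ENNReal.ofReal (q (x,ξ)^2) *
                  (ENNReal.ofReal (w x ξ) *
                   ENNReal.ofReal (Real.exp (-(2*lam)*((t-T/2)^2 - (ξ-T/2)^2)))) := by
                gcongr
                rw [← ENNReal.ofReal_mul (hw_pos x ξ).le]
                apply ENNReal.ofReal_le_ofReal
                exact weight_mono T δ s a (A x) lam t ξ hδ hδθ hs ha hax rfl htI hξI hΔ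
            _ = ENNReal.ofReal (q (x,ξ)^2 * w x ξ) *
                  ENNReal.ofReal (Real.exp (-(2*lam)*((t-T/2)^2 - (ξ-T/2)^2))) := by
                rw [← mul_assoc, ← ENNReal.ofReal_mul (sq_nonneg _)]
      _ = ∫⁻ ξ in Ι (T/2) t, H (x, t) ξ := by
          rw [← lintegral_const_mul' _ _ ENNReal.ofReal_ne_top]
          apply setLIntegral_congr_fun measurableSet_uIoc
          intro ξ hξ
          have hΔ : (ξ-T/2)^2 ≤ (t-T/2)^2 := hΔξ ξ hξ
          show ENNReal.ofReal (|t - T/2|) * _ = H (x, t) ξ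
          rw [hHdef]
          simp only [if_pos hΔ]
          rw [ENNReal.ofReal_mul (abs_nonneg _)]
          ring
      _ ≤ ∫⁻ ξ in Ioo δ (T-δ), H (x, t) ξ := lintegral_mono_set hsub
  have hHmeas : Measurable (fun z : (X × ℝ) × ℝ => H z.1 z.2) := by
    rw [hHdef]
    simp only
    have h1 : Measurable fun y : (X × ℝ) × ℝ => ENNReal.ofReal (|y.1.2 - T/2| *
        Real.exp (-(2*lam)*((y.1.2-T/2)^2 - (y.2-T/2)^2))) := by fun_prop
    have h2 : Measurable fun y : (X × ℝ) × ℝ =>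
        ENNReal.ofReal (q (y.1.1, y.2)^2 * w y.1.1 y.2) := by
      have hm : Measurable fun y : (X × ℝ) × ℝ => (y.1.1, y.2) :=
        measurable_fst.fst.prodMk measurable_snd
      have hg : Measurable fun p : X × ℝ => q p ^ 2 * w p.1 p.2 := hGmeas
      exact ENNReal.measurable_ofReal.comp (hg.comp hm)
    have hset : MeasurableSet {y : (X × ℝ) × ℝ | (y.2 - T/2)^2 ≤ (y.1.2 - T/2)^2} :=
      measurableSet_le (by fun_prop) (by fun_prop)
    exact ((Measurable.ite hset h1 measurable_const).mul h2)
  have hinner : ∀ ξ ∈ Ioo δ (T-δ), (∫⁻ p, H p ξ ∂μ)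
      ≤ ENNReal.ofReal (1/(2*lam)) * ∫⁻ x, ENNReal.ofReal (q (x, ξ)^2 * w x ξ) ∂μX := by
    intro ξ hξ
    have hfactor : ∀ p : X × ℝ, H p ξ =
        (fun x => ENNReal.ofReal (q (x, ξ)^2 * w x ξ)) p.1 *
        (fun t : ℝ => if (ξ - T/2)^2 ≤ (t - T/2)^2 then
          ENNReal.ofReal (|t - T/2| *
            Real.exp (-(2*lam)*((t-T/2)^2 - (ξ-T/2)^2))) else 0) p.2 := by
      intro p
      rw [hHdef]
      simp only
      split_ifs with h
      · ring
      · simp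
    have hf1 : Measurable fun x => ENNReal.ofReal (q (x, ξ)^2 * w x ξ) := by
      have hg : Measurable fun p : X × ℝ => q p ^ 2 * w p.1 p.2 := hGmeas
      exact ENNReal.measurable_ofReal.comp (hg.comp measurable_prodMk_right)
    have hf2 : Measurable fun t : ℝ => (if (ξ - T/2)^2 ≤ (t - T/2)^2 then
        ENNReal.ofReal (|t - T/2| *
          Real.exp (-(2*lam)*((t-T/2)^2 - (ξ-T/2)^2))) else 0 : ℝ≥0∞) := by
      have hset : MeasurableSet {t : ℝ | (ξ - T/2)^2 ≤ (t - T/2)^2} :=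
        measurableSet_le (by fun_prop) (by fun_prop)
      exact Measurable.ite hset (by fun_prop) measurable_const
    calc (∫⁻ p, H p ξ ∂μ)
        = (∫⁻ x, ENNReal.ofReal (q (x, ξ)^2 * w x ξ) ∂μX) *
          (∫⁻ t, (if (ξ - T/2)^2 ≤ (t - T/2)^2 then
            ENNReal.ofReal (|t - T/2| *
              Real.exp (-(2*lam)*((t-T/2)^2 - (ξ-T/2)^2))) else 0) ∂ν) := by
          simp_rw [hfactor]
          exact lintegral_prod_mul hf1.aemeasurable hf2.aemeasurable
      _ ≤ (∫⁻ x, ENNReal.ofReal (q (x, ξ)^2 * w x ξ) ∂μX) * ENNReal.ofReal (1/(2*lam)) := by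
          refine mul_le_mul_right ?_ _
          exact tint_bound T δ lam hδ hδθ hlam hξ
      _ = ENNReal.ofReal (1/(2*lam)) * _ := mul_comm _ _
  have hmain : ∫⁻ p, ENNReal.ofReal (F p) ∂μ
      ≤ ENNReal.ofReal (1/(2*lam)) * ∫⁻ p, ENNReal.ofReal (G p) ∂μ := by
    calc ∫⁻ p, ENNReal.ofReal (F p) ∂μ
        ≤ ∫⁻ p, (∫⁻ ξ, H p ξ ∂ν) ∂μ := lintegral_mono_ae hcore
      _ = ∫⁻ ξ, (∫⁻ p, H p ξ ∂μ) ∂ν := lintegral_lintegral_swap hHmeas.aemeasurable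
      _ ≤ ∫⁻ ξ, (ENNReal.ofReal (1/(2*lam)) *
            ∫⁻ x, ENNReal.ofReal (q (x, ξ)^2 * w x ξ) ∂μX) ∂ν := by
          apply lintegral_mono_ae
          filter_upwards [ae_restrict_mem measurableSet_Ioo] with ξ hξ
          exact hinner ξ hξ
      _ = ENNReal.ofReal (1/(2*lam)) *
            ∫⁻ ξ, (∫⁻ x, ENNReal.ofReal (q (x, ξ)^2 * w x ξ) ∂μX) ∂ν :=
          lintegral_const_mul' _ _ ENNReal.ofReal_ne_top
      _ = ENNReal.ofReal (1/(2*lam)) * ∫⁻ p, ENNReal.ofReal (G p) ∂μ := by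
          congr 1
          rw [hμdef]
          rw [MeasureTheory.lintegral_prod_symm (fun p => ENNReal.ofReal (G p))
            (ENNReal.measurable_ofReal.comp hGmeas).aemeasurable]
  have hGlint : ∫⁻ p, ENNReal.ofReal (G p) ∂μ = ENNReal.ofReal (∫ p, G p ∂μ) :=
    (ofReal_integral_eq_lintegral_ofReal hGint hGnn).symm
  have hGint_nn : 0 ≤ ∫ p, G p ∂μ := integral_nonneg_of_ae hGnn
  have hκs : 0 ≤ (T / 2 - δ) ^ 4 / (2 * a) / s := by positivity
  have h2lam : (0:ℝ) ≤ 1/(2*lam) := le_of_lt (div_pos one_pos (by linarith))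
  have hκeq : 1/(2*lam) = (T / 2 - δ) ^ 4 / (2 * a) / s := by
    rw [hlamdef]
    rw [show 2 * (s * a / (T / 2 - δ) ^ 4) = 2*s*a/(T / 2 - δ)^4 by ring,
      one_div_div, div_div]
    congr 1
    ring
  have hFnn : 0 ≤ᵐ[μ] F := Filter.Eventually.of_forall fun p =>
    mul_nonneg (sq_nonneg _) (hw_pos p.1 p.2).le
  by_cases hF : Integrable F μ
  · rw [integral_eq_lintegral_of_nonneg_ae hFnn hF.1]
    apply ENNReal.toReal_le_of_le_ofReal (mul_nonneg hκs hGint_nn)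
    calc ∫⁻ p, ENNReal.ofReal (F p) ∂μ
        ≤ ENNReal.ofReal (1/(2*lam)) * ∫⁻ p, ENNReal.ofReal (G p) ∂μ := hmain
      _ = ENNReal.ofReal ((T / 2 - δ) ^ 4 / (2 * a) / s * ∫ p, G p ∂μ) := by
          rw [hGlint, ← ENNReal.ofReal_mul h2lam, hκeq]
  · rw [integral_undef hF]
    exact mul_nonneg hκs hGint_nn


/-- **Lemma 3.2.** Let `Ω ⊂ ℝⁿ` be a bounded connected open set, `T > 0`, `θ = T/2`,
`0 < δ < θ`, and let `α ∈ C(Ω̄)` be positive on `Ω̄`.  With the Carleman weight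
`η(x,t) = α(x)/((t-δ)(T-δ-t))` there is a constant `κ > 0` (depending on `α, δ, T, Ω`)
such that for every `s > 0` and every `q ∈ L²(Ω×(δ,T-δ))`,
`∫_δ^{T-δ}∫_Ω (∫_θ^t q(x,ξ)dξ)² e^{-2sη} ≤ (κ/s) ∫_δ^{T-δ}∫_Ω q² e^{-2sη}`. -/
theorem integral_carleman_weight_estimate
    (n : ℕ) (Ω : Set (EuclideanSpace ℝ (Fin n)))
    (hΩo : IsOpen Ω) (hΩb : Bornology.IsBounded Ω) (hΩc : IsConnected Ω)
    (T δ : ℝ) (hT : 0 < T) (hδ : 0 < δ) (hδθ : δ < T / 2)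
    (α : EuclideanSpace ℝ (Fin n) → ℝ)
    (hα : ContinuousOn α (closure Ω))
    (hαpos : ∀ x ∈ closure Ω, 0 < α x) :
    ∃ κ : ℝ, 0 < κ ∧
      ∀ s : ℝ, 0 < s →
        ∀ q : EuclideanSpace ℝ (Fin n) → ℝ → ℝ,
          MemLp (fun p : EuclideanSpace ℝ (Fin n) × ℝ => q p.1 p.2) 2
            (volume.restrict (Ω ×ˢ Set.Ioo δ (T - δ))) →
          (∫ p in Ω ×ˢ Set.Ioo δ (T - δ),
              (∫ ξ in (T / 2)..p.2, q p.1 ξ) ^ 2 *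
                Real.exp (-2 * s * (α p.1 / ((p.2 - δ) * (T - δ - p.2)))))
            ≤ (κ / s) *
              ∫ p in Ω ×ˢ Set.Ioo δ (T - δ),
                (q p.1 p.2) ^ 2 *
                  Real.exp (-2 * s * (α p.1 / ((p.2 - δ) * (T - δ - p.2)))) := by
  have hθδ : (0:ℝ) < T/2 - δ := by linarith
  have hcomp : IsCompact (closure Ω) := hΩb.isCompact_closure
  have hne : (closure Ω).Nonempty := hΩc.nonempty.closure
  obtain ⟨x₀, hx₀, hmin⟩ := hcomp.exists_isMinOn hne hα
  set a := α x₀ with hadef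
  have ha : 0 < a := hαpos x₀ hx₀
  refine ⟨(T/2 - δ)^4/(2*a), div_pos (pow_pos hθδ 4) (by linarith), ?_⟩
  intro s hs q hq
  set μ0 := volume.restrict Ω with hμ0
  set ν := volume.restrict (Ioo δ (T - δ)) with hν
  have hrest : (volume : Measure (EuclideanSpace ℝ (Fin n) × ℝ)).restrict
      (Ω ×ˢ Ioo δ (T - δ)) = μ0.prod ν := by
    rw [hμ0, hν, Measure.prod_restrict, ← MeasureTheory.Measure.volume_eq_prod]
  have hαae : AEMeasurable α μ0 := (hα.mono subset_closure).aemeasurable hΩo.measurableSet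
  set A := hαae.mk α with hAdef
  have hAmeas : Measurable A := hαae.measurable_mk
  have hαA : α =ᵐ[μ0] A := hαae.ae_eq_mk
  have hAa : ∀ᵐ x ∂μ0, a ≤ A x := by
    filter_upwards [hαA, ae_restrict_mem hΩo.measurableSet] with x h1 h2
    rw [← h1]
    exact hmin (subset_closure h2)
  have hq' : MemLp (fun p : EuclideanSpace ℝ (Fin n) × ℝ => q p.1 p.2) 2 (μ0.prod ν) := by
    rw [← hrest]; exact hq
  have hQae : AEStronglyMeasurable (fun p : EuclideanSpace ℝ (Fin n) × ℝ => q p.1 p.2)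
      (μ0.prod ν) := hq'.aestronglyMeasurable
  set Q := hQae.mk _ with hQdef
  have hQmeas : Measurable Q := hQae.stronglyMeasurable_mk.measurable
  have hqQ : (fun p : EuclideanSpace ℝ (Fin n) × ℝ => q p.1 p.2) =ᵐ[μ0.prod ν] Q :=
    hQae.ae_eq_mk
  have hmem2 : MemLp Q 2 (μ0.prod ν) := hq'.ae_eq hqQ
  have hint : Integrable (fun p => Q p ^ 2) (μ0.prod ν) := hmem2.integrable_sq
  have hmemI : ∀ᵐ p : EuclideanSpace ℝ (Fin n) × ℝ ∂(μ0.prod ν), p.2 ∈ Ioo δ (T - δ) :=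
    Measure.quasiMeasurePreserving_snd.ae (ae_restrict_mem measurableSet_Ioo)
  have hαfst : ∀ᵐ p : EuclideanSpace ℝ (Fin n) × ℝ ∂(μ0.prod ν), α p.1 = A p.1 :=
    Measure.quasiMeasurePreserving_fst.ae hαA
  have hslice : ∀ᵐ p : EuclideanSpace ℝ (Fin n) × ℝ ∂(μ0.prod ν),
      ∀ᵐ ξ ∂ν, q p.1 ξ = Q (p.1, ξ) :=
    Measure.quasiMeasurePreserving_fst.ae (Measure.ae_ae_of_ae_prod hqQ)
  have hθI : T/2 ∈ Ioo δ (T - δ) := ⟨hδθ, by linarith⟩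
  have hL : (fun p : EuclideanSpace ℝ (Fin n) × ℝ => (∫ ξ in (T/2)..p.2, q p.1 ξ)^2 *
        Real.exp (-2*s*(α p.1/((p.2 - δ)*(T - δ - p.2)))))
      =ᵐ[μ0.prod ν] (fun p => (∫ ξ in (T/2)..p.2, Q (p.1, ξ))^2 *
        Real.exp (-2*s*(A p.1/((p.2 - δ)*(T - δ - p.2))))) := by
    filter_upwards [hmemI, hαfst, hslice] with p ht hα1 hsl
    have hsub : Ι (T/2) p.2 ⊆ Ioo δ (T - δ) := by
      intro ξ hξ
      rw [Set.uIoc, Set.mem_Ioc] at hξ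
      exact ⟨lt_of_lt_of_le (lt_min hθI.1 ht.1) hξ.1.le,
        lt_of_le_of_lt hξ.2 (max_lt hθI.2 ht.2)⟩
    have heq : (∫ ξ in (T/2)..p.2, q p.1 ξ) = ∫ ξ in (T/2)..p.2, Q (p.1, ξ) := by
      apply intervalIntegral.integral_congr_ae
      have h2 := (ae_restrict_iff' measurableSet_Ioo).mp hsl
      filter_upwards [h2] with ξ h3 hmem
      exact h3 (hsub hmem)
    rw [heq, hα1]
  have hR : (fun p : EuclideanSpace ℝ (Fin n) × ℝ => (q p.1 p.2)^2 *
        Real.exp (-2*s*(α p.1/((p.2 - δ)*(T - δ - p.2)))))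
      =ᵐ[μ0.prod ν] (fun p => (Q p)^2 *
        Real.exp (-2*s*(A p.1/((p.2 - δ)*(T - δ - p.2))))) := by
    filter_upwards [hqQ, hαfst] with p h1 h2
    rw [h1, h2]
  show (∫ p, _ ∂(volume.restrict (Ω ×ˢ Ioo δ (T - δ)))) ≤ _ *
    ∫ p, _ ∂(volume.restrict (Ω ×ˢ Ioo δ (T - δ)))
  rw [hrest, integral_congr_ae hL, integral_congr_ae hR]
  exact carleman_aux μ0 T δ a s hδ hδθ ha hs A hAmeas hAa Q hQmeas hint
end

section
/- Let T > 0, θ = T/2, and let α ∈ C(Ω̄) satisfy α > 0 on Ω̄; set η(x,t) = α(x)/(t(T−t)). Then there exists a function ε: (0,∞) → (0,∞) with ε(s) → 0 as s → ∞ such that for every f ∈ L²(Ω) and every sufficiently large s > 0, ∫_{Ω} ∫₀^T |f(x)|² e^{−2sη(x,t)} dt dx ≤ ε(s) ∫_Ω |f(x)|² e^{−2sη(x,θ)} dx. -/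
open MeasureTheory Real Set

lemma expo_ineq (T t a m s : ℝ) (hT : 0 < T) (ht0 : 0 < t) (htT : t < T) (hm : 0 < m)
    (ha : m ≤ a) (hs : 0 < s) :
    -2 * s * (a / (t * (T - t))) ≤ -(32 * m / T^4 * s) * (t - T/2)^2 + -2 * s * (a / ((T/2) * (T - T/2))) := by
  have hp : 0 < t * (T - t) := mul_pos ht0 (by linarith)
  have hp0 : t * (T - t) ≠ 0 := hp.ne'
  have hq4 : (T/2) * (T - T/2) = T^2/4 := by ring
  have hq0 : (T/2) * (T - T/2) ≠ 0 := by rw [hq4]; positivity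
  have hpq : 1/(t*(T-t)) - 1/((T/2)*(T-T/2)) = (t-T/2)^2/((t*(T-t)) * ((T/2)*(T-T/2))) := by
    rw [div_sub_div _ _ hp0 hq0]
    congr 1
    ring
  have h1 : t*(T-t) ≤ T^2/4 := by nlinarith [sq_nonneg (T - 2*t)]
  have h3 : 4*m*(t*(T-t)) ≤ a*T^2 := by nlinarith
  have h5 : 32*m/T^4 ≤ 8*a/((t*(T-t))*T^2) := by
    rw [div_le_div_iff₀ (by positivity) (by positivity)]
    nlinarith [mul_le_mul_of_nonneg_right h3 (by positivity : (0:ℝ) ≤ 8*T^2)]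
  have h6 : (32*m/T^4) * (t-T/2)^2 ≤ (8*a/((t*(T-t))*T^2)) * (t-T/2)^2 :=
    mul_le_mul_of_nonneg_right h5 (sq_nonneg _)
  have hd : (t*(T-t)) * ((T/2)*(T-T/2)) = (t*(T-t)*T^2)/4 := by ring
  have hfinal : (32*m/T^4*s)*(t-T/2)^2 ≤ 2*s*(a/(t*(T-t))) - 2*s*(a/((T/2)*(T-T/2))) := by
    have e : 2*s*(a/(t*(T-t))) - 2*s*(a/((T/2)*(T-T/2)))
        = s*(2*a*(1/(t*(T-t)) - 1/((T/2)*(T-T/2)))) := by ring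
    rw [e, hpq]
    calc (32*m/T^4*s)*(t-T/2)^2 = s*((32*m/T^4)*(t-T/2)^2) := by ring
      _ ≤ s*((8*a/((t*(T-t))*T^2))*(t-T/2)^2) := mul_le_mul_of_nonneg_left h6 hs.le
      _ = s*(2*a*((t-T/2)^2/((t*(T-t)) * ((T/2)*(T-T/2))))) := by
          rw [hd, div_div_eq_mul_div]; ring
  linarith

/-- key time-integral bound -/
lemma time_int_bound (T m a s : ℝ) (hT : 0 < T) (hm : 0 < m) (ha : m ≤ a) (hs : 0 < s) :
    ∫ t in Set.Ioo 0 T, Real.exp (-2 * s * (a / (t * (T - t))))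
      ≤ Real.sqrt (π / (32 * m / T^4 * s)) * Real.exp (-2 * s * (a / ((T/2) * (T - T/2)))) := by
  set b : ℝ := 32 * m / T^4 * s with hb_def
  have hb : 0 < b := by positivity
  have hgint : Integrable (fun t : ℝ => Real.exp (-b * (t - T/2)^2)) :=
    (integrable_exp_neg_mul_sq hb).comp_sub_right (T/2)
  have hgauss : ∫ t : ℝ, Real.exp (-b * (t - T/2)^2) = Real.sqrt (π / b) := by
    rw [integral_sub_right_eq_self (fun u : ℝ => Real.exp (-b * u^2)) (T/2), integral_gaussian]
  calc ∫ t in Set.Ioo 0 T, Real.exp (-2 * s * (a / (t * (T - t))))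
      ≤ ∫ t in Set.Ioo 0 T, Real.exp (-b * (t - T/2)^2) * Real.exp (-2 * s * (a / ((T/2) * (T - T/2)))) := by
        apply integral_mono_of_nonneg
        · exact Filter.Eventually.of_forall fun t => (Real.exp_nonneg _)
        · exact (hgint.mul_const _).restrict
        · rw [Filter.EventuallyLE, ae_restrict_iff' measurableSet_Ioo]
          apply Filter.Eventually.of_forall
          intro t ht
          rw [← Real.exp_add]
          apply Real.exp_le_exp.mpr
          exact expo_ineq T t a m s hT ht.1 ht.2 hm ha hs
    _ = (∫ t in Set.Ioo 0 T, Real.exp (-b * (t - T/2)^2)) * Real.exp (-2 * s * (a / ((T/2) * (T - T/2)))) :=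
        integral_mul_const _ _
    _ ≤ (∫ t : ℝ, Real.exp (-b * (t - T/2)^2)) * Real.exp (-2 * s * (a / ((T/2) * (T - T/2)))) := by
        apply mul_le_mul_of_nonneg_right _ (Real.exp_nonneg _)
        exact setIntegral_le_integral hgint (Filter.Eventually.of_forall fun t => Real.exp_nonneg _)
    _ = Real.sqrt (π / b) * Real.exp (-2 * s * (a / ((T/2) * (T - T/2)))) := by rw [hgauss]

/-- For the parabolic Carleman weight `η(x,t) = α(x)/(t(T-t))` with `α ∈ C(Ω̄)`,
`α > 0` on `Ω̄`, `θ = T/2`, there is a function `ε(s) → 0` as `s → ∞` such that for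
every `f ∈ L²(Ω)` and all sufficiently large `s`,
`∫_Ω ∫₀^T f(x)² e^{-2sη(x,t)} dt dx ≤ ε(s) ∫_Ω f(x)² e^{-2sη(x,θ)} dx`. -/
theorem time_integral_weight_decay
    (n : ℕ) (Ω : Set (EuclideanSpace ℝ (Fin n)))
    (hΩo : IsOpen Ω) (hΩb : Bornology.IsBounded Ω) (hΩc : IsConnected Ω)
    (T : ℝ) (hT : 0 < T)
    (α : EuclideanSpace ℝ (Fin n) → ℝ)
    (hα : ContinuousOn α (closure Ω))
    (hαpos : ∀ x ∈ closure Ω, 0 < α x) :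
    ∃ (ε : ℝ → ℝ) (s₀ : ℝ), 0 < s₀ ∧
      (∀ s, 0 < s → 0 < ε s) ∧
      Filter.Tendsto ε Filter.atTop (nhds 0) ∧
      ∀ s : ℝ, s₀ ≤ s →
        ∀ f : EuclideanSpace ℝ (Fin n) → ℝ,
          MemLp f 2 (volume.restrict Ω) →
          (∫ x in Ω, ∫ t in Set.Ioo 0 T,
              (f x) ^ 2 * Real.exp (-2 * s * (α x / (t * (T - t)))))
            ≤ ε s * ∫ x in Ω,
                (f x) ^ 2 * Real.exp (-2 * s * (α x / ((T / 2) * (T - T / 2)))) := by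
  obtain ⟨x₀, hx₀c, hx₀min⟩ := hΩb.isCompact_closure.exists_isMinOn hΩc.nonempty.closure hα
  set m : ℝ := α x₀ with hm_def
  have hm : 0 < m := hαpos x₀ hx₀c
  refine ⟨fun s => Real.sqrt (π / (32 * m / T^4 * s)), 1, one_pos, ?_, ?_, ?_⟩
  · intro s hs
    apply Real.sqrt_pos.mpr
    positivity
  · have h1 : Filter.Tendsto (fun s : ℝ => π / (32 * m / T^4 * s)) Filter.atTop (nhds 0) := by
      apply Filter.Tendsto.div_atTop tendsto_const_nhds
      exact Filter.Tendsto.const_mul_atTop (by positivity) Filter.tendsto_id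
    have := (Real.continuous_sqrt.tendsto 0).comp h1
    simpa [Function.comp_def] using this
  · intro s hs f hf
    have hs0 : 0 < s := lt_of_lt_of_le one_pos hs
    have hf2 : Integrable (fun x => f x ^ 2) (volume.restrict Ω) := hf.integrable_sq
    have hαm : AEMeasurable α (volume.restrict Ω) :=
      (hα.mono subset_closure).aemeasurable hΩo.measurableSet
    have hexpm : AEMeasurable (fun x => Real.exp (-2 * s * (α x / ((T/2) * (T - T/2)))))
        (volume.restrict Ω) :=
      Real.measurable_exp.comp_aemeasurable ((hαm.div_const _).const_mul _)
    have hRHSint : Integrable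
        (fun x => Real.sqrt (π / (32 * m / T^4 * s)) *
          (f x ^ 2 * Real.exp (-2 * s * (α x / ((T/2) * (T - T/2)))))) (volume.restrict Ω) := by
      apply Integrable.const_mul
      apply Integrable.mono' hf2
      · exact hf2.aestronglyMeasurable.mul hexpm.aestronglyMeasurable
      · rw [ae_restrict_iff' hΩo.measurableSet]
        apply Filter.Eventually.of_forall
        intro x hx
        have hax : 0 < α x := hαpos x (subset_closure hx)
        have hq4 : (T/2) * (T - T/2) = T^2/4 := by ring
        have he1 : Real.exp (-2 * s * (α x / ((T/2) * (T - T/2)))) ≤ 1 := by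
          apply Real.exp_le_one_iff.mpr
          rw [hq4]
          have : 0 < α x / (T^2/4) := by positivity
          nlinarith
        have h0 : 0 ≤ Real.exp (-2 * s * (α x / ((T/2) * (T - T/2)))) := Real.exp_nonneg _
        rw [Real.norm_eq_abs, abs_of_nonneg (by positivity)]
        calc f x ^ 2 * Real.exp (-2 * s * (α x / ((T/2) * (T - T/2))))
            ≤ f x ^ 2 * 1 := mul_le_mul_of_nonneg_left he1 (sq_nonneg _)
          _ = f x ^ 2 := mul_one _
    have key : ∀ x ∈ Ω,
        (∫ t in Set.Ioo 0 T, f x ^ 2 * Real.exp (-2 * s * (α x / (t * (T - t)))))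
          ≤ Real.sqrt (π / (32 * m / T^4 * s)) *
              (f x ^ 2 * Real.exp (-2 * s * (α x / ((T/2) * (T - T/2))))) := by
      intro x hx
      have ha : m ≤ α x := hx₀min (subset_closure hx)
      rw [MeasureTheory.integral_const_mul]
      have := time_int_bound T m (α x) s hT hm ha hs0
      calc f x ^ 2 * ∫ t in Set.Ioo 0 T, Real.exp (-2 * s * (α x / (t * (T - t))))
          ≤ f x ^ 2 * (Real.sqrt (π / (32 * m / T^4 * s)) *
              Real.exp (-2 * s * (α x / ((T/2) * (T - T/2))))) :=
            mul_le_mul_of_nonneg_left this (sq_nonneg _)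
        _ = Real.sqrt (π / (32 * m / T^4 * s)) *
              (f x ^ 2 * Real.exp (-2 * s * (α x / ((T/2) * (T - T/2))))) := by ring
    calc (∫ x in Ω, ∫ t in Set.Ioo 0 T, f x ^ 2 * Real.exp (-2 * s * (α x / (t * (T - t)))))
        ≤ ∫ x in Ω, Real.sqrt (π / (32 * m / T^4 * s)) *
            (f x ^ 2 * Real.exp (-2 * s * (α x / ((T/2) * (T - T/2))))) := by
          apply integral_mono_of_nonneg _ hRHSint
          · rw [Filter.EventuallyLE, ae_restrict_iff' hΩo.measurableSet]
            exact Filter.Eventually.of_forall key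
          · apply Filter.Eventually.of_forall
            intro x
            exact integral_nonneg fun t => by positivity
      _ = Real.sqrt (π / (32 * m / T^4 * s)) *
            ∫ x in Ω, f x ^ 2 * Real.exp (-2 * s * (α x / ((T/2) * (T - T/2)))) :=
          MeasureTheory.integral_const_mul _ _
end
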